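/- Let p be an odd prime, let N be a real number with 1 ≤ N and 8N < p, and let ℓ ∈ (ℤ/pℤ)^×. Define 𝕊_ℓ = { (u, v) ∈ (ℤ/pℤ)^× × (ℤ/pℤ)^× : u + v = ℓ, and the least nonnegative residues of u² and of v² both lie in the interval [N, 2N] }. Let a ∈ {0, 1, …, p−1} be the least nonnegative residue of ℓ^{−2} and b ∈ {0, 1, …, p−1} the least nonnegative residue of ℓ². Then |𝕊_ℓ| ≤ #{ n ∈ ℤ : |n| ≤ N and ‖(a n² + b)/p‖ ≤ 8N/p }, where ‖x‖ denotes the distance from the real number x to the nearest integer. (Indeed, the map sending (u, v) ∈ 𝕊_ℓ to the representative of u² − v² in [−N, N] is injective and lands in the displayed set.) -/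

import Mathlib

/-!
Send `(u, v)` to `n := ū² - v̄²`, the difference of the lifts of `u²` and `v²`; it lies in
`[-N, N]`. Since `u² - v² = (u - v) ℓ` and `u + v = ℓ`, the residue of `n` recovers `u - v`,
hence `(u, v)`, as `2` and `ℓ` are units. Moreover `ℓ⁻² (u² - v²)² + ℓ² = (u - v)² + (u + v)²
= 2 (u² + v²)`, so `a n² + b` is congruent mod `p` to `2 (ū² + v̄²) ∈ [0, 8N]`, which bounds
`‖(a n² + b)/p‖` by `8N/p`.
-/

open Finset

/-- `‖x‖`: the distance from the real number `x` to the nearest integer. -/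
noncomputable def nint (x : ℝ) : ℝ := |x - (round x : ℝ)|

lemma nint_add_intCast (x : ℝ) (k : ℤ) : nint (x + k) = nint x := by
  simp only [nint, round_add_intCast, Int.cast_add, add_sub_add_right_eq_sub]

lemma nint_le_of_nonneg {x : ℝ} (hx : 0 ≤ x) : nint x ≤ x := by
  simpa [nint, abs_of_nonneg hx] using round_le x 0

lemma nint_intCast_div_le {p : ℕ} {x m : ℤ} (hp : 0 < p) (hm : 0 ≤ m)
    (h : (x : ZMod p) = m) : nint (x / p) ≤ m / p := by
  obtain ⟨k, hk⟩ := (ZMod.intCast_eq_intCast_iff_dvd_sub m x p).mp h.symm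
  have hx : (x : ℝ) = m + p * k := by exact_mod_cast (by linarith : x = m + p * k)
  rw [hx, add_div, mul_div_cancel_left₀ _ (by positivity), nint_add_intCast]
  exact nint_le_of_nonneg (by positivity)

lemma finite_setOf_abs_intCast_le (N : ℝ) : {n : ℤ | |(n : ℝ)| ≤ N}.Finite := by
  convert (isCompact_closedBall (0 : ℤ) N).finite_of_discrete using 1
  ext n
  simp [Int.norm_eq_abs]

section CommRing

variable {R : Type*} [CommRing R]

lemma injOn_sq_sub_sq_of_add_eq {ℓ : R} (hℓ : IsUnit ℓ) (h2 : IsUnit (2 : R)) :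
    Set.InjOn (fun x : R × R => x.1 ^ 2 - x.2 ^ 2) {x | x.1 + x.2 = ℓ} := by
  rintro ⟨u, v⟩ (huv : u + v = ℓ) ⟨u', v'⟩ (huv' : u' + v' = ℓ) (hsq : u ^ 2 - v ^ 2 = _)
  have hdiff : u - v = u' - v' :=
    hℓ.mul_right_cancel (by linear_combination (v - u) * huv + (u' - v') * huv' + hsq)
  have hu : u = u' := h2.mul_left_cancel (by linear_combination huv - huv' + hdiff)
  exact Prod.ext hu (by linear_combination huv - huv' - hu)

lemma inv_sq_mul_sq_sub_sq_sq_add_sq {ℓ : Rˣ} {u v : R} (h : u + v = ℓ) :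
    ((ℓ⁻¹ : Rˣ) : R) ^ 2 * (u ^ 2 - v ^ 2) ^ 2 + (ℓ : R) ^ 2 = 2 * (u ^ 2 + v ^ 2) := by
  have hinv : ((ℓ⁻¹ : Rˣ) : R) * (u + v) = 1 := by rw [h, Units.inv_mul]
  rw [← h]
  linear_combination (u - v) ^ 2 * (((ℓ⁻¹ : Rˣ) : R) * (u + v) + 1) * hinv

end CommRing

namespace ZMod

variable {p : ℕ}

def liftSqSub (x : ZMod p × ZMod p) : ℤ := (x.1 ^ 2).val - (x.2 ^ 2).val

lemma abs_liftSqSub_le {N : ℝ} {x : ZMod p × ZMod p}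
    (h₁ : N ≤ (x.1 ^ 2).val ∧ ((x.1 ^ 2).val : ℝ) ≤ 2 * N)
    (h₂ : N ≤ (x.2 ^ 2).val ∧ ((x.2 ^ 2).val : ℝ) ≤ 2 * N) : |(liftSqSub x : ℝ)| ≤ N := by
  rw [abs_le, liftSqSub]
  push_cast
  constructor <;> linarith [h₁.1, h₁.2, h₂.1, h₂.2]

variable [NeZero p]

lemma intCast_liftSqSub (x : ZMod p × ZMod p) : (liftSqSub x : ZMod p) = x.1 ^ 2 - x.2 ^ 2 := by
  simp only [liftSqSub, Int.cast_sub, Int.cast_natCast, natCast_zmod_val]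

lemma injOn_liftSqSub {ℓ : ZMod p} (hℓ : IsUnit ℓ) (h2 : IsUnit (2 : ZMod p)) :
    Set.InjOn liftSqSub {x : ZMod p × ZMod p | x.1 + x.2 = ℓ} := fun x hx y hy hxy =>
  injOn_sq_sub_sq_of_add_eq hℓ h2 hx hy <| by
    simpa only [intCast_liftSqSub] using congrArg (Int.cast : ℤ → ZMod p) hxy

lemma nint_liftSqSub_le {ℓ : (ZMod p)ˣ} {x : ZMod p × ZMod p} (h : x.1 + x.2 = ℓ) :
    nint (((((ℓ⁻¹ : (ZMod p)ˣ) : ZMod p) ^ 2).val * (liftSqSub x : ℝ) ^ 2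
        + ((ℓ : ZMod p) ^ 2).val) / p) ≤ 2 * ((x.1 ^ 2).val + (x.2 ^ 2).val) / p := by
  have hcong : (((((ℓ⁻¹ : (ZMod p)ˣ) : ZMod p) ^ 2).val * liftSqSub x ^ 2
      + ((ℓ : ZMod p) ^ 2).val : ℤ) : ZMod p) = (2 * ((x.1 ^ 2).val + (x.2 ^ 2).val) : ℤ) := by
    push_cast [intCast_liftSqSub, natCast_zmod_val]
    exact inv_sq_mul_sq_sub_sq_sq_add_sq h
  have := nint_intCast_div_le (NeZero.pos p) (by positivity) hcong
  push_cast at this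
  exact this

end ZMod

open scoped Classical in
theorem stmt11 (p : ℕ) [Fact p.Prime] (hodd : Odd p) (N : ℝ) (ℓ : (ZMod p)ˣ) :
    (Finset.univ.filter (fun uv : (ZMod p)ˣ × (ZMod p)ˣ =>
        ((uv.1 : ZMod p) + (uv.2 : ZMod p) = (ℓ : ZMod p)) ∧
        (N ≤ ((((uv.1 : ZMod p))^2).val : ℝ) ∧ ((((uv.1 : ZMod p))^2).val : ℝ) ≤ 2 * N) ∧
        (N ≤ ((((uv.2 : ZMod p))^2).val : ℝ) ∧ ((((uv.2 : ZMod p))^2).val : ℝ) ≤ 2 * N))).card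
    ≤ Set.ncard {n : ℤ | |(n : ℝ)| ≤ N ∧
        nint (((((((ℓ⁻¹ : (ZMod p)ˣ) : ZMod p))^2).val : ℝ) * (n : ℝ)^2
            + ((((ℓ : ZMod p))^2).val : ℝ)) / p) ≤ 8 * N / p} := by
  have h2 : IsUnit (2 : ZMod p) := by
    exact_mod_cast (ZMod.isUnit_iff_coprime 2 p).mpr (Nat.coprime_two_left.mpr hodd)
  rw [← Set.ncard_coe_finset]
  simp only [Finset.coe_filter, Finset.mem_univ, true_and]
  refine Set.ncard_le_ncard_of_injOn (ZMod.liftSqSub ∘ Prod.map Units.val Units.val) ?_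
    ((ZMod.injOn_liftSqSub ℓ.isUnit h2).comp
      (Units.val_injective.prodMap Units.val_injective).injOn fun x hx => hx.1)
    ((finite_setOf_abs_intCast_le N).subset fun n hn => hn.1)
  rintro x ⟨huv, hu, hv⟩
  refine ⟨ZMod.abs_liftSqSub_le hu hv, (ZMod.nint_liftSqSub_le huv).trans ?_⟩
  gcongr ?_ / _
  simp only [Prod.map_fst, Prod.map_snd]
  linarith [hu.2, hv.2]
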